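/- Let Ω ⊆ ℝ^d be open and connected, let L^{α,β} u := −Tr(A^{α,β}(x)D²u) − b^{α,β}(x)·Du + c^{α,β}(x)u with A^{α,β}(x) positive semidefinite and c^{α,β}(x) ≥ 0, and assume the Isaacs operators sup_β inf_α L^{α,β} and inf_α sup_β L^{α,β} are finite and continuous. Let Z₁,…,Z_m : closure(Ω) → ℝ^d be locally Lipschitz vector fields whose control system (S) satisfies the bounded time controllability property (BTC). Then: (i) if there exists β̄ such that A^{α,β̄}(x) ≥ Z_i(x) ⊗ Z_i(x) for all α, i and x, then any viscosity subsolution of sup_β inf_α L^{α,β} u = 0 attaining a nonnegative maximum in Ω is constant; (ii) if for every α there exists β(α) such that A^{α,β(α)}(x) ≥ Z_i(x) ⊗ Z_i(x) for all i and x, then any viscosity subsolution of inf_α sup_β L^{α,β} u = 0 attaining a nonnegative maximum in Ω is constant. -/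

import Mathlib

open Set Metric Filter Topology

noncomputable section

/-- Euclidean space `ℝ^d`. -/
abbrev EV (d : ℕ) := EuclideanSpace ℝ (Fin d)

/-- The outer product `p ⊗ p` as a `d × d` matrix. -/
def outer {d : ℕ} (p : EV d) : Matrix (Fin d) (Fin d) ℝ := Matrix.of fun i j => p i * p j

/-- Euclidean dot product. -/
def dotp {d : ℕ} (p q : EV d) : ℝ := ∑ i, p i * q i

/-- Euclidean gradient. -/
def grad {d : ℕ} (φ : EV d → ℝ) (x : EV d) : EV d :=
  (EuclideanSpace.equiv (Fin d) ℝ).symm fun i => fderiv ℝ φ x (EuclideanSpace.single i 1)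

/-- Euclidean Hessian matrix. -/
def hess {d : ℕ} (φ : EV d → ℝ) (x : EV d) : Matrix (Fin d) (Fin d) ℝ :=
  Matrix.of fun i j =>
    fderiv ℝ (fun y => fderiv ℝ φ y (EuclideanSpace.single j 1)) x (EuclideanSpace.single i 1)

/-- `F` is proper: nondecreasing in `r`, nonincreasing in the matrix argument
(w.r.t. the positive semidefinite order `Y ≤ X ↔ (X - Y).PosSemidef`). -/
def IsProper {d m : ℕ} (Ω : Set (EV d))
    (F : EV d → ℝ → EV m → Matrix (Fin m) (Fin m) ℝ → ℝ) : Prop :=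
  ∀ x ∈ Ω, ∀ r s : ℝ, ∀ p : EV m, ∀ X Y : Matrix (Fin m) (Fin m) ℝ,
    r ≤ s → (X - Y).PosSemidef → F x r p X ≤ F x s p Y

/-- Lower semicontinuity of the operator `F`, jointly in all its arguments. -/
def IsLscOperator {d m : ℕ} (Ω : Set (EV d))
    (F : EV d → ℝ → EV m → Matrix (Fin m) (Fin m) ℝ → ℝ) : Prop :=
  LowerSemicontinuousOn
    (fun q : EV d × ℝ × EV m × Matrix (Fin m) (Fin m) ℝ => F q.1 q.2.1 q.2.2.1 q.2.2.2)
    {q | q.1 ∈ Ω ∧ q.2.2.1 ≠ 0 ∧ q.2.2.2.IsSymm}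

/-- Condition (ii) (scaling): for some `φ : (0,1] → (0,∞)`,
`F(x, ξs, ξp, ξX) ≥ φ(ξ) F(x,s,p,X)` for all `ξ ∈ (0,1]`, `s ∈ [-1,0]`. -/
def HasScaling {d m : ℕ} (Ω : Set (EV d))
    (F : EV d → ℝ → EV m → Matrix (Fin m) (Fin m) ℝ → ℝ) : Prop :=
  ∃ φ : ℝ → ℝ, (∀ ξ ∈ Ioc (0:ℝ) 1, 0 < φ ξ) ∧
    ∀ ξ ∈ Ioc (0:ℝ) 1, ∀ s ∈ Icc (-1:ℝ) 0, ∀ x ∈ Ω, ∀ p : EV m, p ≠ 0 →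
      ∀ X : Matrix (Fin m) (Fin m) ℝ, X.IsSymm →
        φ ξ * F x s p X ≤ F x (ξ * s) (ξ • p) (ξ • X)

/-- Ellipticity condition (elli) for a subelliptic operator `G`. -/
def IsElliptic {d m : ℕ} (Ω : Set (EV d))
    (G : EV d → ℝ → EV m → Matrix (Fin m) (Fin m) ℝ → ℝ) : Prop :=
  ∀ x ∈ Ω, ∀ q : EV m, q ≠ 0 → ∀ X : Matrix (Fin m) (Fin m) ℝ, X.IsSymm →
    ∃ γ : ℝ, 0 < γ ∧ 0 < G x 0 q (X - γ • outer q)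

/-- `Z` is a generalized subunit vector for `F` at `x`:
`sup_{γ>0} F(x,0,p, I - γ p⊗p) > 0` whenever `Z·p ≠ 0`. -/
def IsSubunitAt {d : ℕ} (F : EV d → ℝ → EV d → Matrix (Fin d) (Fin d) ℝ → ℝ)
    (x : EV d) (Z : EV d) : Prop :=
  ∀ p : EV d, dotp Z p ≠ 0 → ∃ γ : ℝ, 0 < γ ∧ 0 < F x 0 p (1 - γ • outer p)

/-- Viscosity subsolution (test functions with nonvanishing gradient). -/
def IsViscSubsol {d : ℕ} (Ω : Set (EV d))
    (F : EV d → ℝ → EV d → Matrix (Fin d) (Fin d) ℝ → ℝ) (u : EV d → ℝ) : Prop :=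
  ∀ φ : EV d → ℝ, ContDiff ℝ 2 φ → ∀ x ∈ Ω,
    IsLocalMaxOn (fun y => u y - φ y) Ω x → grad φ x ≠ 0 →
      F x (u x) (grad φ x) (hess φ x) ≤ 0

/-- Viscosity supersolution (test functions with nonvanishing gradient). -/
def IsViscSupersol {d : ℕ} (Ω : Set (EV d))
    (F : EV d → ℝ → EV d → Matrix (Fin d) (Fin d) ℝ → ℝ) (v : EV d → ℝ) : Prop :=
  ∀ φ : EV d → ℝ, ContDiff ℝ 2 φ → ∀ x ∈ Ω,
    IsLocalMinOn (fun y => v y - φ y) Ω x → grad φ x ≠ 0 →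
      0 ≤ F x (v x) (grad φ x) (hess φ x)

/-- Viscosity subsolution (all `C²` test functions). -/
def IsViscSubsolAll {d : ℕ} (Ω : Set (EV d))
    (F : EV d → ℝ → EV d → Matrix (Fin d) (Fin d) ℝ → ℝ) (u : EV d → ℝ) : Prop :=
  ∀ φ : EV d → ℝ, ContDiff ℝ 2 φ → ∀ x ∈ Ω,
    IsLocalMaxOn (fun y => u y - φ y) Ω x →
      F x (u x) (grad φ x) (hess φ x) ≤ 0

/-- Viscosity supersolution (all `C²` test functions). -/
def IsViscSupersolAll {d : ℕ} (Ω : Set (EV d))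
    (F : EV d → ℝ → EV d → Matrix (Fin d) (Fin d) ℝ → ℝ) (v : EV d → ℝ) : Prop :=
  ∀ φ : EV d → ℝ, ContDiff ℝ 2 φ → ∀ x ∈ Ω,
    IsLocalMinOn (fun y => v y - φ y) Ω x →
      0 ≤ F x (v x) (grad φ x) (hess φ x)

/-- Locally Lipschitz on a set. -/
def LocLipschitzOn {α β : Type*} [PseudoMetricSpace α] [PseudoMetricSpace β]
    (f : α → β) (s : Set α) : Prop :=
  ∀ x ∈ s, ∃ K : NNReal, ∃ ε : ℝ, 0 < ε ∧ LipschitzOnWith K f (s ∩ Metric.ball x ε)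

/-- Admissible controls: measurable, with `∑ i βᵢ(t)² ≤ 1`. -/
def Admissible {m : ℕ} (β : ℝ → Fin m → ℝ) : Prop :=
  (∀ i, Measurable fun t => β t i) ∧ ∀ t : ℝ, ∑ i, (β t i) ^ 2 ≤ 1

/-- (Carathéodory) trajectory of the control system `y' = ∑ᵢ βᵢ Zᵢ(y)` on `[0, T]`. -/
def IsTrajOn {d m : ℕ} (Z : Fin m → EV d → EV d) (β : ℝ → Fin m → ℝ)
    (y : ℝ → EV d) (T : ℝ) : Prop :=
  ContinuousOn y (Icc 0 T) ∧
    ∀ t ∈ Icc 0 T, y t = y 0 + ∫ s in (0:ℝ)..t, ∑ i, β s i • Z i (y s)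

/-- `x₁` is reachable from `x₀` by the control system, with trajectory staying in `Ω`. -/
def ReachableIn {d m : ℕ} (Ω : Set (EV d)) (Z : Fin m → EV d → EV d)
    (x₀ x₁ : EV d) : Prop :=
  ∃ (β : ℝ → Fin m → ℝ) (y : ℝ → EV d) (T : ℝ), 0 ≤ T ∧ Admissible β ∧
    IsTrajOn Z β y T ∧ (∀ t ∈ Icc 0 T, y t ∈ Ω) ∧ y 0 = x₀ ∧ y T = x₁

/-- Bounded time controllability in `Ω`. -/
def BTC {d m : ℕ} (Ω : Set (EV d)) (Z : Fin m → EV d → EV d) : Prop :=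
  ∀ x₀ ∈ Ω, ∀ x₁ ∈ Ω, ReachableIn Ω Z x₀ x₁

/-- Generalized exterior (Bony, proximal) normal `ν` to `K` at `z`. -/
def IsExtNormal {d : ℕ} (K : Set (EV d)) (z ν : EV d) : Prop :=
  z ∈ frontier K ∧ ‖ν‖ = 1 ∧
    ∃ t : ℝ, 0 < t ∧ Metric.closedBall (z + t • ν) t ∩ closure K = {z}

/-- Lie bracket of two vector fields. -/
def vfBracket {d : ℕ} (X Y : EV d → EV d) : EV d → EV d :=
  fun x => fderiv ℝ Y x (X x) - fderiv ℝ X x (Y x)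

/-- Vector fields obtained from `Z₁,…,Z_m` by iterated Lie brackets. -/
inductive LieGenerated {d m : ℕ} (Z : Fin m → EV d → EV d) : (EV d → EV d) → Prop
  | base (i : Fin m) : LieGenerated Z (Z i)
  | bracket {X Y : EV d → EV d} :
      LieGenerated Z X → LieGenerated Z Y → LieGenerated Z (vfBracket X Y)

/-- Hörmander condition: the fields and their iterated brackets span `ℝ^d` at every point of `Ω`. -/
def Hormander {d m : ℕ} (Ω : Set (EV d)) (Z : Fin m → EV d → EV d) : Prop :=
  ∀ x ∈ Ω, Submodule.span ℝ {v : EV d | ∃ W, LieGenerated Z W ∧ W x = v} = ⊤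

/-- Intrinsic (horizontal) gradient `σ(x)ᵀ p`. -/
def sigmaT {d m : ℕ} (σ : Fin m → EV d → EV d) (x : EV d) (p : EV d) : EV m :=
  (EuclideanSpace.equiv (Fin m) ℝ).symm fun j => ∑ i, σ j x i * p i

/-- `σ(x)ᵀ X σ(x)` as an `m × m` matrix. -/
def sigmaHess {d m : ℕ} (σ : Fin m → EV d → EV d) (x : EV d)
    (X : Matrix (Fin d) (Fin d) ℝ) : Matrix (Fin m) (Fin m) ℝ :=
  Matrix.of fun j k => ∑ i, ∑ l, σ j x i * X i l * σ k x l

/-- First-order correction term `g(x,p)` of the symmetrized intrinsic Hessian. -/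
def corrTerm {d m : ℕ} (σ : Fin m → EV d → EV d) (x : EV d) (p : EV d) :
    Matrix (Fin m) (Fin m) ℝ :=
  Matrix.of fun j k =>
    ((∑ i, (fderiv ℝ (σ k) x (σ j x)) i * p i) +
      (∑ i, (fderiv ℝ (σ j) x (σ k x)) i * p i)) / 2

/-- Euclidean form `F(x,r,p,X) = G(x, r, σᵀp, σᵀXσ + g(x,p))` of a subelliptic operator. -/
def euclOp {d m : ℕ} (σ : Fin m → EV d → EV d)
    (G : EV d → ℝ → EV m → Matrix (Fin m) (Fin m) ℝ → ℝ) :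
    EV d → ℝ → EV d → Matrix (Fin d) (Fin d) ℝ → ℝ :=
  fun x r p X => G x r (sigmaT σ x p) (sigmaHess σ x X + corrTerm σ x p)

/-- `A ≥ Z ⊗ Z` in the quadratic-form sense: `ξᵀAξ ≥ (Z·ξ)²` for all `ξ`. -/
def matGEouter {d : ℕ} (A : Matrix (Fin d) (Fin d) ℝ) (Z : EV d) : Prop :=
  ∀ ξ : EV d, (dotp Z ξ) ^ 2 ≤ ∑ i, ∑ j, A i j * ξ i * ξ j

/-- The two-parameter linear operator `L^{α,β}` evaluated at `(x,r,p,X)`. -/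
def linOp2 {d : ℕ} {I J : Type*} (A : I → J → EV d → Matrix (Fin d) (Fin d) ℝ)
    (b : I → J → EV d → EV d) (c : I → J → EV d → ℝ) (α : I) (β : J)
    (x : EV d) (r : ℝ) (p : EV d) (X : Matrix (Fin d) (Fin d) ℝ) : ℝ :=
  -((A α β x) * X).trace - dotp (b α β x) p + c α β x * r

/-- The lower Hamilton–Jacobi–Isaacs operator `F₋ = sup_β inf_α L^{α,β}`. -/
def isaacsLower {d : ℕ} {I J : Type*} (A : I → J → EV d → Matrix (Fin d) (Fin d) ℝ)
    (b : I → J → EV d → EV d) (c : I → J → EV d → ℝ) :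
    EV d → ℝ → EV d → Matrix (Fin d) (Fin d) ℝ → ℝ :=
  fun x r p X => ⨆ β, ⨅ α, linOp2 A b c α β x r p X

/-- The upper Hamilton–Jacobi–Isaacs operator `F₊ = inf_α sup_β L^{α,β}`. -/
def isaacsUpper {d : ℕ} {I J : Type*} (A : I → J → EV d → Matrix (Fin d) (Fin d) ℝ)
    (b : I → J → EV d → EV d) (c : I → J → EV d → ℝ) :
    EV d → ℝ → EV d → Matrix (Fin d) (Fin d) ℝ → ℝ :=
  fun x r p X => ⨅ α, ⨆ β, linOp2 A b c α β x r p X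
/-!
Let `M = max u ≥ 0`. If some `Z i z` is not orthogonal to `z - v` at a point `z` where a ball
centred at `v` touches the maximum set `{u = M}` from outside, the subunit condition
`F(z, 0, 0, -ζ ⊗ ζ) > 0` and the superhomogeneity of `F` make `F` positive on the first and
second derivatives of the barrier `-ε exp(-(κ/2)‖y - v‖²)` for large `κ`; then `u` minus this
barrier has a local maximum near `z` at which the subsolution inequality fails. So the fields are
tangent to the maximum set. Taking for `v` the midpoint between a point `y(a)` of a trajectory and
its nearest point `z` in the maximum set, orthogonality of `y(a) - z` to all `Z i z` together with
the Lipschitz bound on the fields yields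
`d(b)² ≤ d(a)² (1 + C (b - a)) + C (b - a)²` for the distance `d` of the trajectory to that set,
and Grönwall's inequality shows that a trajectory starting at a maximum point stays in the maximum
set. By bounded time controllability every point of `Ω` is reached. For the Isaacs operators the
hypothesis `A ≥ Zᵢ ⊗ Zᵢ` yields the subunit condition `F(x, 0, 0, -ζ ⊗ ζ) ≥ (Zᵢ(x) · ζ)²`.
-/

open MeasureTheory
open scoped InnerProductSpace NNReal Interval

lemma dotp_eq_inner {d : ℕ} (p q : EV d) : dotp p q = ⟪p, q⟫_ℝ := by
  simp [dotp, PiLp.inner_apply, mul_comm]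

lemma LocLipschitzOn.locallyLipschitzOn {α β : Type*} [PseudoMetricSpace α] [PseudoMetricSpace β]
    {f : α → β} {s : Set α} (hf : LocLipschitzOn f s) : LocallyLipschitzOn s f := by
  intro x hx
  obtain ⟨K, ε, hε, hK⟩ := hf x hx
  exact ⟨K, s ∩ ball x ε, inter_mem_nhdsWithin s (ball_mem_nhds x hε), hK⟩

lemma IsCompact.exists_lipschitzOnWith_and_norm_le {ι E F : Type*} [Fintype ι]
    [PseudoMetricSpace E] [SeminormedAddCommGroup F] {S : Set E} (hS : IsCompact S)
    {Z : ι → E → F} (hZ : ∀ i, LocallyLipschitzOn S (Z i)) :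
    ∃ (L : ℝ≥0) (B : ℝ), 0 ≤ B ∧ (∀ i, LipschitzOnWith L (Z i) S) ∧ ∀ i, ∀ x ∈ S, ‖Z i x‖ ≤ B := by
  choose Li hLi using fun i => (hZ i).exists_lipschitzOnWith_of_compact hS
  obtain ⟨B, hB⟩ :=
    hS.exists_bound_of_continuousOn (continuousOn_pi.2 fun i => (hLi i).continuousOn)
  exact ⟨Finset.univ.sup Li, max B 0, le_max_right _ _,
    fun i => (hLi i).weaken (Finset.le_sup (Finset.mem_univ i)),
    fun i x hx => (norm_le_pi_norm _ i).trans ((hB x hx).trans (le_max_left _ _))⟩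

lemma IsCompact.exists_pos_forall_add_lt {α : Type*} [TopologicalSpace α] {s : Set α}
    {u : α → ℝ} {M : ℝ} (hs : IsCompact s) (hu : UpperSemicontinuousOn u s)
    (hlt : ∀ x ∈ s, u x < M) : ∃ ε > 0, ∀ x ∈ s, u x + ε < M := by
  rcases s.eq_empty_or_nonempty with rfl | hne
  · exact ⟨1, one_pos, by simp⟩
  obtain ⟨a, ha, hmax⟩ := hu.exists_isMaxOn hne hs
  exact ⟨(M - u a) / 2, by linarith [hlt a ha], fun x hx => by
    linarith [hlt a ha, show u x ≤ u a from hmax hx]⟩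

lemma exists_mem_ball_isMaxOn_closedBall {E : Type*} [PseudoMetricSpace E] [ProperSpace E]
    {ψ : E → ℝ} {c : E} {r : ℝ} (hr : 0 ≤ r) (hψ : UpperSemicontinuousOn ψ (closedBall c r))
    (hsphere : ∀ x ∈ sphere c r, ψ x < ψ c) :
    ∃ a ∈ ball c r, IsMaxOn ψ (closedBall c r) a := by
  obtain ⟨a, ha, hmax⟩ := hψ.exists_isMaxOn ⟨c, mem_closedBall_self hr⟩ (isCompact_closedBall c r)
  refine ⟨a, (mem_closedBall.1 ha).lt_of_ne fun h => ?_, hmax⟩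
  exact (hsphere a h).not_ge (hmax (mem_closedBall_self hr))

lemma eq_of_norm_sub_midpoint_le {E : Type*} [NormedAddCommGroup E] [InnerProductSpace ℝ E]
    {w z x : E} (hx : ‖x - midpoint ℝ w z‖ ≤ ‖z - w‖ / 2) (hxw : ‖z - w‖ ≤ ‖x - w‖) : x = z := by
  have hpar : ‖x - w‖ ^ 2 + ‖x - z‖ ^ 2 =
      2 * ‖x - midpoint ℝ w z‖ ^ 2 + 2 * (‖z - w‖ / 2) ^ 2 := by
    have hw : x - w = (x - midpoint ℝ w z) + (⅟2 : ℝ) • (z - w) := by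
      rw [← midpoint_sub_left]; abel
    have hz : x - z = (x - midpoint ℝ w z) - (⅟2 : ℝ) • (z - w) := by
      rw [← right_sub_midpoint]; abel
    have hhalf : ‖(⅟2 : ℝ) • (z - w)‖ = ‖z - w‖ / 2 := by
      rw [norm_smul, invOf_eq_inv]; norm_num; ring
    rw [hw, hz, norm_add_sq_real, norm_sub_sq_real (x - midpoint ℝ w z), hhalf]
    ring
  have h1 : ‖z - w‖ ^ 2 ≤ ‖x - w‖ ^ 2 := pow_le_pow_left₀ (norm_nonneg _) hxw 2
  have h2 : ‖x - midpoint ℝ w z‖ ^ 2 ≤ (‖z - w‖ / 2) ^ 2 := pow_le_pow_left₀ (norm_nonneg _) hx 2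
  rw [← sub_eq_zero, ← norm_eq_zero, ← sq_eq_zero_iff (M₀ := ℝ)]
  nlinarith [sq_nonneg ‖x - z‖]

lemma le_zero_of_forall_le_mul_add_sq {g : ℝ → ℝ} {a b C₁ C₂ : ℝ}
    (hg : ContinuousOn g (Icc a b)) (ha : g a ≤ 0)
    (hstep : ∀ x ∈ Ico a b, ∀ z ∈ Ioc x b, g z ≤ g x * (1 + C₁ * (z - x)) + C₂ * (z - x) ^ 2) :
    ∀ x ∈ Icc a b, g x ≤ 0 := by
  have hslope : ∀ x ∈ Ico a b, ∀ r, C₁ * g x < r →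
      ∃ᶠ z in 𝓝[>] x, (z - x)⁻¹ * (g z - g x) < r := by
    intro x hx r hr
    have hsmall : ∀ᶠ z in 𝓝[>] x, C₂ * (z - x) < r - C₁ * g x := by
      have := (by fun_prop : Continuous fun z : ℝ => C₂ * (z - x)).tendsto x
      exact (tendsto_nhdsWithin_of_tendsto_nhds this).eventually
        (gt_mem_nhds (by simpa using hr))
    refine (hsmall.and (Ioc_mem_nhdsGT hx.2)).frequently.mono ?_
    rintro z ⟨hz, hzx, hzb⟩
    have := hstep x hx z ⟨hzx, hzb⟩
    rw [inv_mul_lt_iff₀ (sub_pos.2 hzx)]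
    nlinarith
  intro x hx
  simpa [gronwallBound_ε0_δ0] using
    le_gronwallBound_of_liminf_deriv_right_le (K := C₁) (ε := 0) hg hslope ha
      (fun x _ => by simp) x hx

lemma mem_of_infDist_sq_le {E : Type*} [PseudoMetricSpace E] {K : Set E} (hK : IsClosed K)
    {y : ℝ → E} {T δ C₁ C₂ : ℝ} (hT : 0 ≤ T) (hδ : 0 < δ) (hC₁ : 0 ≤ C₁) (hC₂ : 0 ≤ C₂)
    (hy : ContinuousOn y (Icc 0 T)) (hy0 : y 0 ∈ K)
    (hstep : ∀ a ∈ Ico 0 T, ∀ b ∈ Ioc a T, infDist (y a) K < δ →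
      infDist (y b) K ^ 2 ≤ infDist (y a) K ^ 2 * (1 + C₁ * (b - a)) + C₂ * (b - a) ^ 2) :
    y T ∈ K := by
  -- truncating at `δ²` makes the step inequality hold everywhere
  set g : ℝ → ℝ := fun t => min (infDist (y t) K ^ 2) (δ ^ 2)
  have hg : ContinuousOn g (Icc 0 T) :=
    ContinuousOn.inf (((continuous_infDist_pt K).comp_continuousOn hy).pow 2) continuousOn_const
  have hgstep : ∀ a ∈ Ico 0 T, ∀ b ∈ Ioc a T,
      g b ≤ g a * (1 + C₁ * (b - a)) + C₂ * (b - a) ^ 2 := by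
    intro a ha b hb
    rcases lt_or_ge (infDist (y a) K) δ with hnear | hfar
    · rw [show g a = infDist (y a) K ^ 2 from
        min_eq_left (pow_le_pow_left₀ infDist_nonneg hnear.le 2)]
      exact (min_le_left _ _).trans (hstep a ha b hb hnear)
    · rw [show g a = δ ^ 2 from min_eq_right (pow_le_pow_left₀ hδ.le hfar 2)]
      have := sub_nonneg.2 hb.1.le
      have : 0 ≤ C₁ * (b - a) := by positivity
      nlinarith [min_le_right (infDist (y b) K ^ 2) (δ ^ 2), sq_nonneg δ, sq_nonneg (b - a)]
  have hgT := le_zero_of_forall_le_mul_add_sq hg (by simp [g, infDist_zero_of_mem hy0]) hgstep T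
    ⟨hT, le_rfl⟩
  rw [hK.mem_iff_infDist_zero ⟨_, hy0⟩]
  rcases min_le_iff.1 hgT with h | h
  · exact pow_eq_zero_iff two_ne_zero |>.1 (le_antisymm h (sq_nonneg _))
  · nlinarith
section Barrier

variable {d : ℕ}

def barrier (v : EV d) (ε κ : ℝ) (y : EV d) : ℝ := -ε * Real.exp (-(κ / 2) * ‖y - v‖ ^ 2)

variable (v : EV d) (ε κ : ℝ)

lemma contDiff_barrier : ContDiff ℝ 2 (barrier v ε κ) :=
  contDiff_const.mul (contDiff_const.mul ((contDiff_id.sub contDiff_const).norm_sq ℝ)).exp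

lemma hasFDerivAt_barrier (x : EV d) :
    HasFDerivAt (barrier v ε κ)
      ((ε * κ * Real.exp (-(κ / 2) * ‖x - v‖ ^ 2)) • innerSL ℝ (x - v)) x := by
  have h := ((((hasFDerivAt_id x).sub_const v).norm_sq).const_mul (-(κ / 2))).exp.const_mul (-ε)
  refine h.congr_fderiv ?_
  ext w
  simp [smul_smul, two_smul]
  ring

lemma fderiv_barrier_apply (x w : EV d) :
    fderiv ℝ (barrier v ε κ) x w = ε * κ * Real.exp (-(κ / 2) * ‖x - v‖ ^ 2) * ⟪x - v, w⟫_ℝ := by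
  simp [(hasFDerivAt_barrier v ε κ x).fderiv, inner_sub_left]

lemma grad_barrier (x : EV d) :
    grad (barrier v ε κ) x = (ε * κ * Real.exp (-(κ / 2) * ‖x - v‖ ^ 2)) • (x - v) := by
  ext i
  simp [grad, fderiv_barrier_apply, EuclideanSpace.inner_single_right]

lemma hess_barrier (x : EV d) :
    hess (barrier v ε κ) x = (ε * κ * Real.exp (-(κ / 2) * ‖x - v‖ ^ 2)) •
      ((1 : Matrix (Fin d) (Fin d) ℝ) - κ • outer (x - v)) := by
  ext i j
  have hpartial : (fun y => fderiv ℝ (barrier v ε κ) y (EuclideanSpace.single j 1)) =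
      fun y => ε * κ * Real.exp (-(κ / 2) * ‖y - v‖ ^ 2) * (y j - v j) := by
    funext y
    simp [fderiv_barrier_apply, EuclideanSpace.inner_single_right]
  have h : HasFDerivAt (fun y : EV d => ε * κ * Real.exp (-(κ / 2) * ‖y - v‖ ^ 2) * (y j - v j))
      _ x :=
    (((((hasFDerivAt_id x).sub_const v).norm_sq).const_mul (-(κ / 2))).exp.const_mul
      (ε * κ)).mul (((EuclideanSpace.proj (𝕜 := ℝ) j).hasFDerivAt (x := x)).sub_const (v j))
  simp only [hess, Matrix.of_apply, hpartial, h.fderiv]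
  by_cases hij : i = j
  · subst hij
    simp [outer, EuclideanSpace.inner_single_right]
    ring
  · simp [outer, EuclideanSpace.inner_single_right, hij, Matrix.one_apply_ne hij]
    ring

end Barrier

section Trajectory

variable {d m : ℕ} {Z : Fin m → EV d → EV d} {β : ℝ → Fin m → ℝ} {y : ℝ → EV d} {T B : ℝ}
  {L : ℝ≥0} {S : Set (EV d)}

lemma Admissible.abs_le_one (hβ : Admissible β) (t : ℝ) (i : Fin m) : |β t i| ≤ 1 := by
  have := (Finset.single_le_sum (fun j _ => sq_nonneg (β t j)) (Finset.mem_univ i)).trans (hβ.2 t)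
  nlinarith [sq_abs (β t i), abs_nonneg (β t i)]

lemma norm_sum_smul_le_of_abs_le_one {E : Type*} [SeminormedAddCommGroup E] [NormedSpace ℝ E]
    {c : Fin m → ℝ} {w : Fin m → E} {C : ℝ} (hc : ∀ i, |c i| ≤ 1) (hw : ∀ i, ‖w i‖ ≤ C) :
    ‖∑ i, c i • w i‖ ≤ m * C := by
  calc ‖∑ i, c i • w i‖ ≤ ∑ i, ‖c i • w i‖ := norm_sum_le _ _
    _ ≤ ∑ _i : Fin m, C := Finset.sum_le_sum fun i _ => by
        rw [norm_smul, Real.norm_eq_abs]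
        nlinarith [hc i, hw i, abs_nonneg (c i), norm_nonneg (w i)]
    _ = m * C := by simp

lemma IsTrajOn.intervalIntegrable (hβ : Admissible β) (hy : IsTrajOn Z β y T)
    (hyS : MapsTo y (Icc 0 T) S) (hZ : ∀ i, ContinuousOn (Z i) S) (hZB : ∀ i, ∀ x ∈ S, ‖Z i x‖ ≤ B)
    {a b : ℝ} (ha : a ∈ Icc 0 T) (hb : b ∈ Icc 0 T) :
    IntervalIntegrable (fun s => ∑ i, β s i • Z i (y s)) volume a b := by
  refine IntegrableOn.intervalIntegrable (IntegrableOn.mono_set ?_ (uIcc_subset_Icc ha hb))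
  refine Integrable.of_bound (C := m * B) ?_ ?_
  · exact Finset.aestronglyMeasurable_fun_sum _ fun i _ =>
      (hβ.1 i).aestronglyMeasurable.smul
        (((hZ i).comp hy.1 hyS).aestronglyMeasurable measurableSet_Icc)
  · exact (ae_restrict_iff' measurableSet_Icc).2 <| Eventually.of_forall fun s hs =>
      norm_sum_smul_le_of_abs_le_one (hβ.abs_le_one s) fun i => hZB i _ (hyS hs)

lemma IsTrajOn.sub_eq_integral (hβ : Admissible β) (hy : IsTrajOn Z β y T)
    (hyS : MapsTo y (Icc 0 T) S) (hZ : ∀ i, ContinuousOn (Z i) S) (hZB : ∀ i, ∀ x ∈ S, ‖Z i x‖ ≤ B)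
    {a b : ℝ} (ha : a ∈ Icc 0 T) (hb : b ∈ Icc 0 T) :
    y b - y a = ∫ s in a..b, ∑ i, β s i • Z i (y s) := by
  have h0 : (0 : ℝ) ∈ Icc 0 T := ⟨le_rfl, ha.1.trans ha.2⟩
  rw [hy.2 b hb, hy.2 a ha, add_sub_add_left_eq_sub, intervalIntegral.integral_interval_sub_left
    (hy.intervalIntegrable hβ hyS hZ hZB h0 hb) (hy.intervalIntegrable hβ hyS hZ hZB h0 ha)]

lemma IsTrajOn.norm_sub_le (hβ : Admissible β) (hy : IsTrajOn Z β y T)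
    (hyS : MapsTo y (Icc 0 T) S) (hZ : ∀ i, ContinuousOn (Z i) S) (hZB : ∀ i, ∀ x ∈ S, ‖Z i x‖ ≤ B)
    {a b : ℝ} (ha : a ∈ Icc 0 T) (hb : b ∈ Icc 0 T) (hab : a ≤ b) :
    ‖y b - y a‖ ≤ m * B * (b - a) := by
  rw [hy.sub_eq_integral hβ hyS hZ hZB ha hb]
  refine (intervalIntegral.norm_integral_le_of_norm_le_const fun s hs => ?_).trans_eq
    (by rw [abs_of_nonneg (sub_nonneg.2 hab)])
  rw [uIoc_of_le hab] at hs
  exact norm_sum_smul_le_of_abs_le_one (hβ.abs_le_one s)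
    fun i => hZB i _ (hyS ⟨ha.1.trans hs.1.le, hs.2.trans hb.2⟩)

lemma IsTrajOn.norm_sub_sq_le_of_inner_eq_zero (hβ : Admissible β) (hy : IsTrajOn Z β y T)
    (hyS : MapsTo y (Icc 0 T) S) (hZL : ∀ i, LipschitzOnWith L (Z i) S)
    (hZB : ∀ i, ∀ x ∈ S, ‖Z i x‖ ≤ B) {a b : ℝ} (ha : a ∈ Icc 0 T) (hb : b ∈ Icc 0 T) (hab : a ≤ b)
    {z : EV d} (hzS : z ∈ S) (horth : ∀ i, ⟪y a - z, Z i z⟫_ℝ = 0) :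
    ‖y b - z‖ ^ 2 ≤ ‖y a - z‖ ^ 2 * (1 + 2 * m * L * (b - a))
      + (2 * m ^ 2 * L * B * ‖y a - z‖ + (m * B) ^ 2) * (b - a) ^ 2 := by
  have hZ : ∀ i, ContinuousOn (Z i) S := fun i => (hZL i).continuousOn
  set ρ := ‖y a - z‖
  have hpoint : ∀ s ∈ Ι a b, ‖⟪y a - z, ∑ i, β s i • Z i (y s)⟫_ℝ‖
      ≤ m * L * ρ * (ρ + m * B * (b - a)) := by
    intro s hs
    rw [uIoc_of_le hab] at hs
    have hs' : s ∈ Icc 0 T := ⟨ha.1.trans hs.1.le, hs.2.trans hb.2⟩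
    have hys : ‖y s - z‖ ≤ ρ + m * B * (b - a) := calc
      ‖y s - z‖ ≤ ‖y s - y a‖ + ρ := norm_sub_le_norm_sub_add_norm_sub _ _ _
      _ ≤ m * B * (s - a) + ρ := by gcongr; exact hy.norm_sub_le hβ hyS hZ hZB ha hs' hs.1.le
      _ ≤ ρ + m * B * (b - a) := by
        have := (norm_nonneg _).trans (hy.norm_sub_le hβ hyS hZ hZB ha hs' hs.1.le)
        nlinarith [hs.1, hs.2]
    have hcentre : ⟪y a - z, ∑ i, β s i • Z i (y s)⟫_ℝ =
        ⟪y a - z, ∑ i, β s i • (Z i (y s) - Z i z)⟫_ℝ := by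
      simp [smul_sub, Finset.sum_sub_distrib, inner_sub_right, inner_sum, inner_smul_right, horth]
    rw [hcentre, Real.norm_eq_abs]
    calc _ ≤ ρ * ‖∑ i, β s i • (Z i (y s) - Z i z)‖ := abs_real_inner_le_norm _ _
      _ ≤ ρ * (m * (L * ‖y s - z‖)) := by
        gcongr
        exact norm_sum_smul_le_of_abs_le_one (hβ.abs_le_one s)
          fun i => (hZL i).norm_sub_le (hyS hs') hzS
      _ ≤ ρ * (m * (L * (ρ + m * B * (b - a)))) := by gcongr
      _ = _ := by ring
  have hinner : ⟪y a - z, y b - y a⟫_ℝ ≤ m * L * ρ * (ρ + m * B * (b - a)) * (b - a) := by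
    rw [hy.sub_eq_integral hβ hyS hZ hZB ha hb, ← innerSL_apply_apply ℝ,
      ← (innerSL ℝ (y a - z)).intervalIntegral_comp_comm
        (hy.intervalIntegrable hβ hyS hZ hZB ha hb)]
    refine (le_abs_self _).trans ?_
    rw [← Real.norm_eq_abs]
    refine (intervalIntegral.norm_integral_le_of_norm_le_const hpoint).trans_eq ?_
    rw [abs_of_nonneg (sub_nonneg.2 hab)]
  have hstep := hy.norm_sub_le hβ hyS hZ hZB ha hb hab
  have hexpand : ‖y b - z‖ ^ 2 = ρ ^ 2 + 2 * ⟪y a - z, y b - y a⟫_ℝ + ‖y b - y a‖ ^ 2 := by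
    rw [← norm_add_sq_real, sub_add_sub_cancel']
  rw [hexpand]
  nlinarith [pow_le_pow_left₀ (norm_nonneg _) hstep 2]

end Trajectory

structure SMPConditions {d m : ℕ} (Ω : Set (EV d)) (Z : Fin m → EV d → EV d)
    (F : EV d → ℝ → EV d → Matrix (Fin d) (Fin d) ℝ → ℝ) : Prop where
  continuousOn : ContinuousOn
    (fun q : EV d × ℝ × EV d × Matrix (Fin d) (Fin d) ℝ => F q.1 q.2.1 q.2.2.1 q.2.2.2)
    {q | q.1 ∈ Ω}
  mono : ∀ x ∈ Ω, ∀ r s p X, r ≤ s → F x r p X ≤ F x s p X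
  smul_le : ∀ x ∈ Ω, ∀ τ : ℝ, 0 < τ → ∀ r p X, τ * F x r p X ≤ F x (τ * r) (τ • p) (τ • X)
  subunit : ∀ x ∈ Ω, ∀ ζ, (∃ i, dotp (Z i x) ζ ≠ 0) → 0 < F x 0 0 (-outer ζ)

namespace SMPConditions

variable {d m : ℕ} {Ω : Set (EV d)} {Z : Fin m → EV d → EV d}
  {F : EV d → ℝ → EV d → Matrix (Fin d) (Fin d) ℝ → ℝ} {u : EV d → ℝ} {M : ℝ}

lemma exists_pos_of_dotp_ne_zero (hF : SMPConditions Ω Z F) {z p : EV d} (hz : z ∈ Ω) {i : Fin m}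
    (hi : dotp (Z i z) p ≠ 0) : ∃ κ > 0, 0 < F z (-κ⁻¹) p (1 - κ • outer p) := by
  by_contra! hcon
  -- rescaling by `s⁻¹` turns `hcon` into nonpositivity along a curve tending to `(z, 0, 0, -p ⊗ p)`
  have hle : ∀ s > 0, F z (-s ^ 2) (s • p) (s • 1 - outer p) ≤ 0 := by
    intro s hs
    have h := hF.smul_le z hz s⁻¹ (inv_pos.2 hs) (-s ^ 2) (s • p) (s • 1 - outer p)
    rw [show s⁻¹ * -s ^ 2 = -s by field_simp, inv_smul_smul₀ hs.ne',
      smul_sub, inv_smul_smul₀ hs.ne'] at h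
    have := hcon s⁻¹ (inv_pos.2 hs)
    rw [inv_inv] at this
    nlinarith [inv_pos.2 hs]
  have hcurve : Tendsto
      (fun s : ℝ => (z, -s ^ 2, s • p, s • (1 : Matrix (Fin d) (Fin d) ℝ) - outer p)) (𝓝[>] 0) (𝓝[{q | q.1 ∈ Ω}] (z, 0, 0, -outer p)) := by
    refine tendsto_nhdsWithin_iff.2 ⟨?_, Eventually.of_forall fun _ => hz⟩
    have := (by fun_prop : Continuous fun s : ℝ =>
      (z, -s ^ 2, s • p, s • (1 : Matrix (Fin d) (Fin d) ℝ) - outer p)).tendsto 0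
    simpa using tendsto_nhdsWithin_of_tendsto_nhds this
  have hlim := ((hF.continuousOn (z, 0, 0, -outer p) hz).tendsto.comp hcurve)
  exact (hF.subunit z hz p ⟨i, hi⟩).not_ge
    (le_of_tendsto hlim (eventually_nhdsWithin_of_forall hle))

lemma not_isLocalMaxOn_sub_barrier (hF : SMPConditions Ω Z F) (hsub : IsViscSubsolAll Ω F u)
    {v x : EV d} {ε κ : ℝ} (hx : x ∈ Ω) (hε : 0 < ε) (hκ : 0 < κ)
    (hpos : 0 < F x (-κ⁻¹) (x - v) (1 - κ • outer (x - v)))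
    (hux : -(ε * Real.exp (-(κ / 2) * ‖x - v‖ ^ 2)) ≤ u x) :
    ¬ IsLocalMaxOn (fun y => u y - barrier v ε κ y) Ω x := by
  intro hmax
  have hvisc := hsub _ (contDiff_barrier v ε κ) x hx hmax
  rw [grad_barrier, hess_barrier] at hvisc
  set τ := ε * κ * Real.exp (-(κ / 2) * ‖x - v‖ ^ 2)
  have hτ : 0 < τ := by positivity
  have hr : τ * -κ⁻¹ ≤ u x := by
    rwa [show τ * -κ⁻¹ = -(ε * Real.exp (-(κ / 2) * ‖x - v‖ ^ 2)) by simp only [τ]; field_simp]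
  have hmono := hF.mono x hx _ _ (τ • (x - v)) (τ • (1 - κ • outer (x - v))) hr
  have hhom := hF.smul_le x hx τ hτ (-κ⁻¹) (x - v) (1 - κ • outer (x - v))
  nlinarith [mul_pos hτ hpos]

/-- A subunit field `Z i` is tangent to the maximum set of a subsolution at every point `z` where
a ball centred at `v` touches that set from outside. -/
theorem dotp_eq_zero_of_touching (hF : SMPConditions Ω Z F) (hΩ : IsOpen Ω)
    (hu : UpperSemicontinuousOn u Ω) (hsub : IsViscSubsolAll Ω F u) (hM : 0 ≤ M)
    (humax : ∀ x ∈ Ω, u x ≤ M) {v z : EV d} (hz : z ∈ Ω) (hzM : u z = M)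
    (htouch : ∀ x ∈ Ω, ‖x - v‖ ≤ ‖z - v‖ → u x = M → x = z) (i : Fin m) :
    dotp (Z i z) (z - v) = 0 := by
  by_contra hi
  obtain ⟨κ, hκ, hFz⟩ := hF.exists_pos_of_dotp_ne_zero hz hi
  set Φ : EV d → ℝ := fun w => F w (-κ⁻¹) (w - v) (1 - κ • outer (w - v))
  have hΦ : ContinuousAt Φ z := by
    have hcurve : Continuous fun w : EV d => (w, -κ⁻¹, w - v, 1 - κ • outer (w - v)) := by
      unfold outer; fun_prop
    exact ((hF.continuousOn _ hz).comp hcurve.continuousWithinAt fun w hw => hw).continuousAt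
      (hΩ.mem_nhds hz)
  obtain ⟨r, hr, hball⟩ := nhds_basis_closedBall.mem_iff.1
    (inter_mem (hΦ.preimage_mem_nhds (isOpen_Ioi.mem_nhds hFz)) (hΩ.mem_nhds hz))
  have hballΩ : closedBall z r ⊆ Ω := fun w hw => (hball hw).2
  obtain ⟨ε, hε, hgap⟩ : ∃ ε > 0, ∀ x ∈ sphere z r ∩ closedBall v ‖z - v‖, u x + ε < M := by
    refine ((isCompact_sphere z r).inter_right isClosed_closedBall).exists_pos_forall_add_lt
      (hu.mono fun x hx => hballΩ (sphere_subset_closedBall hx.1)) fun x hx => ?_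
    refine (humax x (hballΩ (sphere_subset_closedBall hx.1))).lt_of_ne fun hxM => ?_
    have hxz := htouch x (hballΩ (sphere_subset_closedBall hx.1))
      (by simpa [dist_eq_norm] using hx.2) hxM
    have := mem_sphere.1 hx.1
    rw [hxz, dist_self] at this
    exact hr.ne this
  set ψ : EV d → ℝ := fun y => u y - barrier v ε κ y
  have hψ : ∀ y, ψ y = u y + ε * Real.exp (-(κ / 2) * ‖y - v‖ ^ 2) := fun y => by
    simp [ψ, barrier]
  have hsphere : ∀ x ∈ sphere z r, ψ x < ψ z := by
    intro x hx
    rw [hψ, hψ, hzM]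
    have huxM := humax x (hballΩ (sphere_subset_closedBall hx))
    rcases le_or_gt ‖x - v‖ ‖z - v‖ with hxv | hxv
    · have hexp : Real.exp (-(κ / 2) * ‖x - v‖ ^ 2) ≤ 1 := Real.exp_le_one_iff.2 (by
        nlinarith [sq_nonneg ‖x - v‖])
      have := hgap x ⟨hx, by simpa [dist_eq_norm] using hxv⟩
      nlinarith [Real.exp_pos (-(κ / 2) * ‖z - v‖ ^ 2)]
    · have hexp : Real.exp (-(κ / 2) * ‖x - v‖ ^ 2) < Real.exp (-(κ / 2) * ‖z - v‖ ^ 2) :=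
        Real.exp_lt_exp.2 (by nlinarith [pow_lt_pow_left₀ hxv (norm_nonneg _) two_ne_zero])
      nlinarith
  have hψusc : UpperSemicontinuousOn ψ (closedBall z r) :=
    (hu.mono hballΩ).add (contDiff_barrier v ε κ).continuous.neg.continuousOn.upperSemicontinuousOn
  obtain ⟨x, hx, hxmax⟩ := exists_mem_ball_isMaxOn_closedBall hr.le hψusc hsphere
  have hxΩ : x ∈ Ω := hballΩ (ball_subset_closedBall hx)
  have hloc : IsLocalMaxOn ψ Ω x := Filter.eventually_of_mem
    (mem_nhdsWithin_of_mem_nhds (isOpen_ball.mem_nhds hx)) fun y hy =>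
      hxmax (ball_subset_closedBall hy)
  refine hF.not_isLocalMaxOn_sub_barrier hsub hxΩ hε hκ (hball (ball_subset_closedBall hx)).1
    ?_ hloc
  have : ψ z ≤ ψ x := hxmax (mem_closedBall_self hr.le)
  rw [hψ, hψ, hzM] at this
  nlinarith [Real.exp_pos (-(κ / 2) * ‖z - v‖ ^ 2)]

theorem inner_eq_zero_of_nearest (hF : SMPConditions Ω Z F) (hΩ : IsOpen Ω)
    (hu : UpperSemicontinuousOn u Ω) (hsub : IsViscSubsolAll Ω F u) (hM : 0 ≤ M)
    (humax : ∀ x ∈ Ω, u x ≤ M) {w z : EV d} (hz : z ∈ Ω) (hzM : u z = M)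
    (hnear : ∀ x ∈ Ω, u x = M → ‖z - w‖ ≤ ‖x - w‖) (i : Fin m) :
    ⟪w - z, Z i z⟫_ℝ = 0 := by
  have hzmid : ‖z - midpoint ℝ w z‖ = ‖z - w‖ / 2 := by
    rw [← dist_eq_norm, dist_right_midpoint, dist_eq_norm']; norm_num; ring
  have h := hF.dotp_eq_zero_of_touching hΩ hu hsub hM humax (v := midpoint ℝ w z) hz hzM
    (fun x hx hxm hxM => eq_of_norm_sub_midpoint_le (hzmid ▸ hxm) (hnear x hx hxM)) i
  rw [dotp_eq_inner, right_sub_midpoint, inner_smul_right, ← neg_sub, inner_neg_right,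
    real_inner_comm] at h
  simpa using h

lemma exists_nearest_inner_eq_zero (hF : SMPConditions Ω Z F) (hΩ : IsOpen Ω)
    (hu : UpperSemicontinuousOn u Ω) (hsub : IsViscSubsolAll Ω F u) (hM : 0 ≤ M)
    (humax : ∀ x ∈ Ω, u x ≤ M) {S : Set (EV d)} (hS : IsCompact S) (hSΩ : S ⊆ Ω) {w : EV d}
    {δ : ℝ} (hwS : closedBall w δ ⊆ S) (hne : (S ∩ u ⁻¹' Ici M).Nonempty)
    (hd : infDist w (S ∩ u ⁻¹' Ici M) < δ) :
    ∃ z ∈ S ∩ u ⁻¹' Ici M, infDist w (S ∩ u ⁻¹' Ici M) = ‖w - z‖ ∧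
      ∀ i, ⟪w - z, Z i z⟫_ℝ = 0 := by
  obtain ⟨z, hzK, hz⟩ := ((hu.mono hSΩ).isCompact_inter_preimage_Ici hS M).exists_infDist_eq_dist
    hne w
  rw [dist_eq_norm] at hz
  refine ⟨z, hzK, hz, hF.inner_eq_zero_of_nearest hΩ hu hsub hM humax (hSΩ hzK.1)
    (le_antisymm (humax z (hSΩ hzK.1)) hzK.2) fun x hx hxM => ?_⟩
  rw [norm_sub_rev z, norm_sub_rev x, ← hz]
  rcases le_or_gt ‖w - x‖ δ with hxδ | hxδ
  · have hxK : x ∈ S ∩ u ⁻¹' Ici M := ⟨hwS (by rwa [mem_closedBall, dist_comm, dist_eq_norm]),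
      hxM.ge⟩
    simpa [dist_eq_norm] using infDist_le_dist_of_mem (x := w) hxK
  · linarith

theorem apply_eq_of_reachableIn (hF : SMPConditions Ω Z F) (hΩ : IsOpen Ω)
    (hZ : ∀ i, LocallyLipschitzOn Ω (Z i)) (hu : UpperSemicontinuousOn u Ω)
    (hsub : IsViscSubsolAll Ω F u) (hM : 0 ≤ M) (humax : ∀ x ∈ Ω, u x ≤ M) {x₀ x₁ : EV d}
    (hx₀ : u x₀ = M) (hreach : ReachableIn Ω Z x₀ x₁) : u x₁ = M := by
  obtain ⟨β, y, T, hT, hβ, hy, hyΩ, rfl, rfl⟩ := hreach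
  have hYc : IsCompact (y '' Icc 0 T) := isCompact_Icc.image_of_continuousOn hy.1
  obtain ⟨δ, hδ, hSΩ⟩ := hYc.exists_cthickening_subset_open hΩ (image_subset_iff.2 hyΩ)
  set S := cthickening δ (y '' Icc 0 T)
  have hSc : IsCompact S := hYc.cthickening
  have hyS : MapsTo y (Icc 0 T) S := fun t ht => self_subset_cthickening _ (mem_image_of_mem y ht)
  obtain ⟨L, B, hB, hZL, hZB⟩ := hSc.exists_lipschitzOnWith_and_norm_le fun i => (hZ i).mono hSΩ
  have hy0K : y 0 ∈ S ∩ u ⁻¹' Ici M := ⟨hyS ⟨le_rfl, hT⟩, hx₀.ge⟩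
  have hK := ((hu.mono hSΩ).isCompact_inter_preimage_Ici hSc M).isClosed
  refine le_antisymm (humax _ (hyΩ T ⟨hT, le_rfl⟩)) (mem_of_infDist_sq_le hK hT hδ
    (C₁ := 2 * m * L) (C₂ := 2 * m ^ 2 * L * B * δ + (m * B) ^ 2) (by positivity) (by positivity)
    hy.1 hy0K fun a ha b hb hd => ?_).2
  have ha' : a ∈ Icc 0 T := Ico_subset_Icc_self ha
  obtain ⟨z, hzK, hz, horth⟩ := hF.exists_nearest_inner_eq_zero hΩ hu hsub hM humax hSc hSΩ
    (closedBall_subset_cthickening (mem_image_of_mem y ha') δ) ⟨_, hy0K⟩ hd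
  have hdist := hy.norm_sub_sq_le_of_inner_eq_zero hβ hyS hZL hZB ha' ⟨ha.1.trans hb.1.le, hb.2⟩
    hb.1.le hzK.1 horth
  rw [hz]
  calc infDist (y b) (S ∩ u ⁻¹' Ici M) ^ 2 ≤ ‖y b - z‖ ^ 2 := pow_le_pow_left₀ infDist_nonneg
        (by simpa [dist_eq_norm] using infDist_le_dist_of_mem (x := y b) hzK) 2
    _ ≤ _ := hdist
    _ ≤ _ := by
      have := sub_nonneg.2 hb.1.le
      gcongr
      rw [← hz]; exact hd.le

end SMPConditions

section Isaacs

variable {d m : ℕ} {I J : Type*} {A : I → J → EV d → Matrix (Fin d) (Fin d) ℝ}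
  {b : I → J → EV d → EV d} {c : I → J → EV d → ℝ}

lemma linOp2_smul (α : I) (β : J) (x : EV d) (τ r : ℝ) (p : EV d) (X : Matrix (Fin d) (Fin d) ℝ) :
    linOp2 A b c α β x (τ * r) (τ • p) (τ • X) = τ * linOp2 A b c α β x r p X := by
  simp only [linOp2, dotp_eq_inner, inner_smul_right, Matrix.mul_smul, Matrix.trace_smul,
    smul_eq_mul]
  ring

lemma linOp2_mono {α : I} {β : J} {x : EV d} (hc : 0 ≤ c α β x) {r s : ℝ} (hrs : r ≤ s)
    (p : EV d) (X : Matrix (Fin d) (Fin d) ℝ) :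
    linOp2 A b c α β x r p X ≤ linOp2 A b c α β x s p X := by
  unfold linOp2
  nlinarith

lemma linOp2_zero_zero_neg_outer (α : I) (β : J) (x ζ : EV d) :
    linOp2 A b c α β x 0 0 (-outer ζ) = ∑ i, ∑ j, A α β x i j * ζ i * ζ j := by
  rw [linOp2, Matrix.mul_neg, Matrix.trace_neg, neg_neg, dotp_eq_inner, inner_zero_right,
    mul_zero, sub_zero, add_zero, Matrix.trace]
  simp only [Matrix.diag_apply, Matrix.mul_apply, outer, Matrix.of_apply]
  exact Finset.sum_congr rfl fun i _ => Finset.sum_congr rfl fun j _ => by ring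

variable {Ω : Set (EV d)} {Z : Fin m → EV d → EV d}

lemma smpConditions_isaacsLower [Nonempty I] (hc : ∀ α β x, 0 ≤ c α β x)
    (hfin1 : ∀ β x r p X, BddBelow (Set.range fun α => linOp2 A b c α β x r p X))
    (hfin2 : ∀ x r p X, BddAbove (Set.range fun β => ⨅ α, linOp2 A b c α β x r p X))
    (hcont : ContinuousOn (fun q : EV d × ℝ × EV d × Matrix (Fin d) (Fin d) ℝ =>
      isaacsLower A b c q.1 q.2.1 q.2.2.1 q.2.2.2) {q | q.1 ∈ Ω})
    {β₀ : J} (hβ₀ : ∀ α i, ∀ x ∈ Ω, matGEouter (A α β₀ x) (Z i x)) :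
    SMPConditions Ω Z (isaacsLower A b c) where
  continuousOn := hcont
  mono x _ r s p X hrs := ciSup_mono (hfin2 x s p X) fun β =>
    ciInf_mono (hfin1 β x r p X) fun α => linOp2_mono (hc α β x) hrs p X
  smul_le x _ τ hτ r p X := by
    simp only [isaacsLower, Real.mul_iSup_of_nonneg hτ.le, Real.mul_iInf_of_nonneg hτ.le,
      linOp2_smul, le_refl]
  subunit x hx ζ := by
    rintro ⟨i, hi⟩
    calc 0 < dotp (Z i x) ζ ^ 2 := by positivity
      _ ≤ ⨅ α, linOp2 A b c α β₀ x 0 0 (-outer ζ) := le_ciInf fun α => by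
        rw [linOp2_zero_zero_neg_outer]; exact hβ₀ α i x hx ζ
      _ ≤ _ := le_ciSup (hfin2 x 0 0 (-outer ζ)) β₀

lemma smpConditions_isaacsUpper [Nonempty I] (hc : ∀ α β x, 0 ≤ c α β x)
    (hfin3 : ∀ α x r p X, BddAbove (Set.range fun β => linOp2 A b c α β x r p X))
    (hfin4 : ∀ x r p X, BddBelow (Set.range fun α => ⨆ β, linOp2 A b c α β x r p X))
    (hcont : ContinuousOn (fun q : EV d × ℝ × EV d × Matrix (Fin d) (Fin d) ℝ =>
      isaacsUpper A b c q.1 q.2.1 q.2.2.1 q.2.2.2) {q | q.1 ∈ Ω})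
    (hβ : ∀ α, ∃ β, ∀ i, ∀ x ∈ Ω, matGEouter (A α β x) (Z i x)) :
    SMPConditions Ω Z (isaacsUpper A b c) where
  continuousOn := hcont
  mono x _ r s p X hrs := ciInf_mono (hfin4 x r p X) fun α =>
    ciSup_mono (hfin3 α x s p X) fun β => linOp2_mono (hc α β x) hrs p X
  smul_le x _ τ hτ r p X := by
    simp only [isaacsUpper, Real.mul_iSup_of_nonneg hτ.le, Real.mul_iInf_of_nonneg hτ.le,
      linOp2_smul, le_refl]
  subunit x hx ζ := by
    rintro ⟨i, hi⟩
    choose βf hβf using hβ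
    calc 0 < dotp (Z i x) ζ ^ 2 := by positivity
      _ ≤ ⨅ α, ⨆ β, linOp2 A b c α β x 0 0 (-outer ζ) := le_ciInf fun α => by
        refine le_trans ?_ (le_ciSup (hfin3 α x 0 0 (-outer ζ)) (βf α))
        rw [linOp2_zero_zero_neg_outer]; exact hβf α i x hx ζ

end Isaacs

theorem smp_isaacs_general {d m : ℕ} (Ω : Set (EV d))
    (hΩ : IsOpen Ω) {I J : Type*} [Nonempty I]
    (A : I → J → EV d → Matrix (Fin d) (Fin d) ℝ) (b : I → J → EV d → EV d)
    (c : I → J → EV d → ℝ)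
    (hc : ∀ α β x, 0 ≤ c α β x)
    (hfin1 : ∀ (β : J) (x : EV d) (r : ℝ) (p : EV d) (X : Matrix (Fin d) (Fin d) ℝ),
      BddBelow (Set.range fun α => linOp2 A b c α β x r p X))
    (hfin2 : ∀ (x : EV d) (r : ℝ) (p : EV d) (X : Matrix (Fin d) (Fin d) ℝ),
      BddAbove (Set.range fun β => ⨅ α, linOp2 A b c α β x r p X))
    (hfin3 : ∀ (α : I) (x : EV d) (r : ℝ) (p : EV d) (X : Matrix (Fin d) (Fin d) ℝ),
      BddAbove (Set.range fun β => linOp2 A b c α β x r p X))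
    (hfin4 : ∀ (x : EV d) (r : ℝ) (p : EV d) (X : Matrix (Fin d) (Fin d) ℝ),
      BddBelow (Set.range fun α => ⨆ β, linOp2 A b c α β x r p X))
    (hcont1 : ContinuousOn
      (fun q : EV d × ℝ × EV d × Matrix (Fin d) (Fin d) ℝ =>
        isaacsLower A b c q.1 q.2.1 q.2.2.1 q.2.2.2) {q | q.1 ∈ closure Ω})
    (hcont2 : ContinuousOn
      (fun q : EV d × ℝ × EV d × Matrix (Fin d) (Fin d) ℝ =>
        isaacsUpper A b c q.1 q.2.1 q.2.2.1 q.2.2.2) {q | q.1 ∈ closure Ω})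
    (Z : Fin m → EV d → EV d) (hZlip : ∀ i, LocLipschitzOn (Z i) (closure Ω))
    (hBTC : BTC Ω Z) :
    ((∃ β₀ : J, ∀ α : I, ∀ i, ∀ x ∈ closure Ω, matGEouter (A α β₀ x) (Z i x)) →
      ∀ u : EV d → ℝ, UpperSemicontinuousOn u Ω →
        IsViscSubsolAll Ω (isaacsLower A b c) u →
        ∀ x₀ ∈ Ω, (∀ x ∈ Ω, u x ≤ u x₀) → 0 ≤ u x₀ → ∀ x ∈ Ω, u x = u x₀) ∧
    ((∀ α : I, ∃ β : J, ∀ i, ∀ x ∈ closure Ω, matGEouter (A α β x) (Z i x)) →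
      ∀ u : EV d → ℝ, UpperSemicontinuousOn u Ω →
        IsViscSubsolAll Ω (isaacsUpper A b c) u →
        ∀ x₀ ∈ Ω, (∀ x ∈ Ω, u x ≤ u x₀) → 0 ≤ u x₀ → ∀ x ∈ Ω, u x = u x₀) := by
  have hZ : ∀ i, LocallyLipschitzOn Ω (Z i) := fun i =>
    (hZlip i).locallyLipschitzOn.mono subset_closure
  refine ⟨fun ⟨β₀, hβ₀⟩ u hu hsub x₀ hx₀ hmax hM x hx => ?_,
    fun hβ u hu hsub x₀ hx₀ hmax hM x hx => ?_⟩
  · have hF := smpConditions_isaacsLower hc hfin1 hfin2 (hcont1.mono fun _ hq => subset_closure hq)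
      fun α i x hx => hβ₀ α i x (subset_closure hx)
    exact hF.apply_eq_of_reachableIn hΩ hZ hu hsub hM hmax rfl (hBTC x₀ hx₀ x hx)
  · have hF := smpConditions_isaacsUpper hc hfin3 hfin4 (hcont2.mono fun _ hq => subset_closure hq)
      fun α => (hβ α).imp fun β hβ i x hx => hβ i x (subset_closure hx)
    exact hF.apply_eq_of_reachableIn hΩ hZ hu hsub hM hmax rfl (hBTC x₀ hx₀ x hx)

/-- Corollary 3.10: Strong Maximum Principle for the Hamilton–Jacobi–Isaacs
operators under bounded time controllability of the fields `Zᵢ`. -/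
theorem smp_isaacs {d m : ℕ} (Ω : Set (EV d))
    (hΩ : IsOpen Ω) (hconn : IsConnected Ω) {I J : Type*} [Nonempty I] [Nonempty J]
    (A : I → J → EV d → Matrix (Fin d) (Fin d) ℝ) (b : I → J → EV d → EV d)
    (c : I → J → EV d → ℝ)
    (hpsd : ∀ α β x, (A α β x).PosSemidef) (hc : ∀ α β x, 0 ≤ c α β x)
    (hfin1 : ∀ (β : J) (x : EV d) (r : ℝ) (p : EV d) (X : Matrix (Fin d) (Fin d) ℝ),
      BddBelow (Set.range fun α => linOp2 A b c α β x r p X))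
    (hfin2 : ∀ (x : EV d) (r : ℝ) (p : EV d) (X : Matrix (Fin d) (Fin d) ℝ),
      BddAbove (Set.range fun β => ⨅ α, linOp2 A b c α β x r p X))
    (hfin3 : ∀ (α : I) (x : EV d) (r : ℝ) (p : EV d) (X : Matrix (Fin d) (Fin d) ℝ),
      BddAbove (Set.range fun β => linOp2 A b c α β x r p X))
    (hfin4 : ∀ (x : EV d) (r : ℝ) (p : EV d) (X : Matrix (Fin d) (Fin d) ℝ),
      BddBelow (Set.range fun α => ⨆ β, linOp2 A b c α β x r p X))
    (hcont1 : ContinuousOn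
      (fun q : EV d × ℝ × EV d × Matrix (Fin d) (Fin d) ℝ =>
        isaacsLower A b c q.1 q.2.1 q.2.2.1 q.2.2.2) {q | q.1 ∈ closure Ω})
    (hcont2 : ContinuousOn
      (fun q : EV d × ℝ × EV d × Matrix (Fin d) (Fin d) ℝ =>
        isaacsUpper A b c q.1 q.2.1 q.2.2.1 q.2.2.2) {q | q.1 ∈ closure Ω})
    (Z : Fin m → EV d → EV d) (hZlip : ∀ i, LocLipschitzOn (Z i) (closure Ω))
    (hBTC : BTC Ω Z) :
    ((∃ β₀ : J, ∀ α : I, ∀ i, ∀ x ∈ closure Ω, matGEouter (A α β₀ x) (Z i x)) →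
      ∀ u : EV d → ℝ, UpperSemicontinuousOn u Ω →
        IsViscSubsolAll Ω (isaacsLower A b c) u →
        ∀ x₀ ∈ Ω, (∀ x ∈ Ω, u x ≤ u x₀) → 0 ≤ u x₀ → ∀ x ∈ Ω, u x = u x₀) ∧
    ((∀ α : I, ∃ β : J, ∀ i, ∀ x ∈ closure Ω, matGEouter (A α β x) (Z i x)) →
      ∀ u : EV d → ℝ, UpperSemicontinuousOn u Ω →
        IsViscSubsolAll Ω (isaacsUpper A b c) u →
        ∀ x₀ ∈ Ω, (∀ x ∈ Ω, u x ≤ u x₀) → 0 ≤ u x₀ → ∀ x ∈ Ω, u x = u x₀) :=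
  smp_isaacs_general Ω hΩ A b c hc hfin1 hfin2 hfin3 hfin4 hcont1 hcont2 Z hZlip hBTC
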